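/- Let N ≥ 1 and let P be a symmetric block tri-diagonal real matrix with diagonal blocks 𝒫₁,…,𝒫_N (each 𝒫ᵢ symmetric of size nᵢ×nᵢ), super-diagonal blocks ℛ₂,…,ℛ_N (ℛᵢ of size n_{i-1}×nᵢ sitting in block position (i-1,i)), sub-diagonal blocks ℛᵢ' in positions (i,i-1), and all other blocks zero. Define the sequence of matrices M₁ = 𝒫₁ and Mᵢ = 𝒫ᵢ − ℛᵢ' M_{i-1}⁻¹ ℛᵢ for i = 2,…,N (each Mᵢ defined whenever M_{i-1} is invertible). Then P is positive definite if and only if Mᵢ is well-defined and positive definite for every i ∈ {1,…,N}. -/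

import Mathlib

/-!
Write `x` in blocks `v₀, …, v_N`. The quadratic form of `P` is
`∑ᵢ vᵢᵀ Pbᵢ vᵢ + 2 ∑ᵢ vᵢᵀ Rbᵢ vᵢ₊₁`, and completing the square block by block turns its
truncation at block `K` into `∑_{i<K} uᵢᵀ Mᵢ uᵢ + v_Kᵀ M_K v_K` with `uᵢ = vᵢ + Mᵢ⁻¹ Rbᵢ vᵢ₊₁`.
If all `Mᵢ` are positive definite, every term is nonnegative and the one at the last nonzero block
is positive. Conversely, for `w ≠ 0` put `w` in block `k`, zeros after it, and choose the earlier
blocks by back substitution so that every `uᵢ` with `i < k` vanishes: the form of `P` then equals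
`wᵀ M_k w`, which is therefore positive.
-/

open Matrix Finset

section Algebra
variable {m k R : Type*} [Fintype m] [Fintype k] [CommRing R]

theorem dotProduct_mulVec_sub_transpose_mul_mul (D : Matrix k k R) (B : Matrix m k R)
    (A : Matrix m m R) (u : k → R) :
    u ⬝ᵥ (D - Bᵀ * A * B) *ᵥ u = u ⬝ᵥ D *ᵥ u - (B *ᵥ u) ⬝ᵥ A *ᵥ B *ᵥ u := by
  rw [sub_mulVec, dotProduct_sub, ← mulVec_mulVec, ← mulVec_mulVec, dotProduct_mulVec u Bᵀ,
    vecMul_transpose, dotProduct_comm]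

variable [DecidableEq m]

theorem dotProduct_mulVec_add_inv_mulVec {A : Matrix m m R} (hA : A.IsSymm) (hu : IsUnit A.det)
    (a b : m → R) :
    (a + A⁻¹ *ᵥ b) ⬝ᵥ A *ᵥ (a + A⁻¹ *ᵥ b)
      = a ⬝ᵥ A *ᵥ a + 2 * (a ⬝ᵥ b) + b ⬝ᵥ A⁻¹ *ᵥ b := by
  have hAA : A *ᵥ A⁻¹ *ᵥ b = b := by rw [mulVec_mulVec, mul_nonsing_inv _ hu, one_mulVec]
  have hsymm : A⁻¹ *ᵥ b ⬝ᵥ A *ᵥ a = a ⬝ᵥ b := by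
    rw [dotProduct_mulVec, ← mulVec_transpose, hA, dotProduct_comm, hAA]
  rw [mulVec_add, hAA, dotProduct_add, add_dotProduct, add_dotProduct, hsymm,
    dotProduct_comm (A⁻¹ *ᵥ b) b]
  ring

end Algebra

theorem Matrix.IsSymm.sub_transpose_mul_inv_mul {m k R : Type*} [Fintype m] [DecidableEq m]
    [CommRing R] {D : Matrix k k R} {A : Matrix m m R} (hD : D.IsSymm) (hA : A.IsSymm)
    (B : Matrix m k R) : (D - Bᵀ * A⁻¹ * B).IsSymm :=
  hD.sub <| by rw [IsSymm, transpose_mul, transpose_mul, transpose_transpose, hA.inv.eq,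
    Matrix.mul_assoc]

theorem Matrix.PosDef.isSymm {m : Type*} {A : Matrix m m ℝ} (hA : A.PosDef) : A.IsSymm :=
  isHermitian_iff_isSymm.mp hA.isHermitian

section SigmaBlocks
variable {ι R : Type*} {m : ι → Type*}

def sigmaBlock (P : Matrix (Σ i, m i) (Σ i, m i) R) (i j : ι) : Matrix (m i) (m j) R :=
  of fun a b => P ⟨i, a⟩ ⟨j, b⟩

theorem sigmaBlock_transpose_of_isSymm {P : Matrix (Σ i, m i) (Σ i, m i) R} (hP : P.IsSymm)
    (i j : ι) : (sigmaBlock P i j)ᵀ = sigmaBlock P j i := by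
  ext a b
  exact hP.apply _ _

variable [Fintype ι] [∀ i, Fintype (m i)]

theorem dotProduct_mulVec_eq_sum_sigmaBlock [CommSemiring R] (P : Matrix (Σ i, m i) (Σ i, m i) R)
    (x : (Σ i, m i) → R) :
    x ⬝ᵥ P *ᵥ x = ∑ i, ∑ j, (fun a => x ⟨i, a⟩) ⬝ᵥ sigmaBlock P i j *ᵥ fun b => x ⟨j, b⟩ := by
  simp only [dotProduct, mulVec, sigmaBlock, of_apply, Fintype.sum_sigma, Finset.mul_sum]
  exact Fintype.sum_congr _ _ fun i => Finset.sum_comm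

end SigmaBlocks

theorem sum_range_sum_range_of_tridiagonal {R : Type*} [AddCommMonoid R] (T : ℕ → ℕ → R)
    (hsymm : ∀ i j, T j i = T i j) (hzero : ∀ i j, i + 1 < j → T i j = 0) (t : ℕ) :
    ∑ i ∈ range (t + 1), ∑ j ∈ range (t + 1), T i j
      = ∑ i ∈ range (t + 1), T i i + 2 • ∑ i ∈ range t, T i (i + 1) := by
  induction t with
  | zero => simp
  | succ t ih =>
    have hcol : ∑ i ∈ range (t + 1), T i (t + 1) = T t (t + 1) :=
      sum_eq_single_of_mem t (self_mem_range_succ t) fun i hi _ =>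
        hzero i (t + 1) (by rw [mem_range] at hi; omega)
    have hrow : ∑ j ∈ range (t + 1), T (t + 1) j = T t (t + 1) := by
      rw [← hcol]
      exact sum_congr rfl fun j _ => hsymm j (t + 1)
    rw [sum_range_succ, sum_range_succ (T (t + 1)), hrow,
      sum_congr rfl fun i _ => sum_range_succ (T i) (t + 1), sum_add_distrib, hcol, ih,
      sum_range_succ (fun i => T i i) (t + 1), sum_range_succ (fun i => T i (i + 1)) t]
    abel

section BlockTridiagonal
variable {R : Type*} [CommRing R] {n : ℕ → ℕ}

def tridiagForm (Pb : (i : ℕ) → Matrix (Fin (n i)) (Fin (n i)) R)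
    (Rb : (i : ℕ) → Matrix (Fin (n i)) (Fin (n (i + 1))) R) (K : ℕ)
    (v : (i : ℕ) → Fin (n i) → R) : R :=
  ∑ i ∈ range (K + 1), v i ⬝ᵥ Pb i *ᵥ v i + 2 * ∑ i ∈ range K, v i ⬝ᵥ Rb i *ᵥ v (i + 1)

structure IsSymmBlockTridiagonal {N : ℕ}
    (P : Matrix ((i : Fin (N + 1)) × Fin (n i)) ((i : Fin (N + 1)) × Fin (n i)) R)
    (Pb : (i : ℕ) → Matrix (Fin (n i)) (Fin (n i)) R)
    (Rb : (i : ℕ) → Matrix (Fin (n i)) (Fin (n (i + 1))) R) : Prop where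
  isSymm : P.IsSymm
  diag : ∀ (i : Fin (N + 1)) (a b : Fin (n i)), P ⟨i, a⟩ ⟨i, b⟩ = Pb i a b
  super : ∀ (i j : Fin (N + 1)) (hij : (j : ℕ) = (i : ℕ) + 1) (a : Fin (n i)) (b : Fin (n j)),
    P ⟨i, a⟩ ⟨j, b⟩ = Rb i a (Fin.cast (congrArg n hij) b)
  zero : ∀ (i j : Fin (N + 1)), (i : ℕ) + 1 < (j : ℕ) →
    ∀ (a : Fin (n i)) (b : Fin (n j)), P ⟨i, a⟩ ⟨j, b⟩ = 0

variable {N : ℕ} {P : Matrix ((i : Fin (N + 1)) × Fin (n i)) ((i : Fin (N + 1)) × Fin (n i)) R}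
  {Pb : (i : ℕ) → Matrix (Fin (n i)) (Fin (n i)) R}
  {Rb : (i : ℕ) → Matrix (Fin (n i)) (Fin (n (i + 1))) R}

theorem IsSymmBlockTridiagonal.isSymm_diag (hP : IsSymmBlockTridiagonal P Pb Rb) {i : ℕ}
    (hi : i < N + 1) : (Pb i).IsSymm :=
  IsSymm.ext fun a b => by rw [← hP.diag ⟨i, hi⟩, ← hP.diag ⟨i, hi⟩, hP.isSymm.apply]

theorem IsSymmBlockTridiagonal.dotProduct_mulVec_eq_tridiagForm
    (hP : IsSymmBlockTridiagonal P Pb Rb)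
    {x : ((i : Fin (N + 1)) × Fin (n i)) → R} {v : (i : ℕ) → Fin (n i) → R}
    (hv : ∀ (i : Fin (N + 1)) (a : Fin (n i)), v i a = x ⟨i, a⟩) :
    x ⬝ᵥ P *ᵥ x = tridiagForm Pb Rb N v := by
  -- The `(i, j)` block contribution, extended by `0` outside `0, …, N` to sum over `range`.
  set T : ℕ → ℕ → R := fun i j => if h : i < N + 1 ∧ j < N + 1 then
    v i ⬝ᵥ sigmaBlock P ⟨i, h.1⟩ ⟨j, h.2⟩ *ᵥ v j else 0 with hT
  have hTsymm : ∀ i j, T j i = T i j := by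
    intro i j
    by_cases h : i < N + 1 ∧ j < N + 1
    · simp only [hT]
      rw [dif_pos h, dif_pos h.symm, dotProduct_mulVec, ← vecMul_transpose,
        sigmaBlock_transpose_of_isSymm hP.isSymm, dotProduct_comm]
    · simp only [hT]
      rw [dif_neg h, dif_neg (mt And.symm h)]
  have hTzero : ∀ i j, i + 1 < j → T i j = 0 := by
    intro i j hij
    by_cases h : i < N + 1 ∧ j < N + 1
    · have hblock : sigmaBlock P ⟨i, h.1⟩ ⟨j, h.2⟩ = 0 := by
        ext a b
        exact hP.zero ⟨i, h.1⟩ ⟨j, h.2⟩ hij a b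
      simp only [hT]
      rw [dif_pos h, hblock, zero_mulVec, dotProduct_zero]
    · simp only [hT]
      rw [dif_neg h]
  have hTdiag : ∀ i < N + 1, T i i = v i ⬝ᵥ Pb i *ᵥ v i := by
    intro i hi
    have hblock : sigmaBlock P ⟨i, hi⟩ ⟨i, hi⟩ = Pb i := by
      ext a b
      exact hP.diag ⟨i, hi⟩ a b
    simp only [hT]
    rw [dif_pos ⟨hi, hi⟩, hblock]
  have hTsuper : ∀ i < N, T i (i + 1) = v i ⬝ᵥ Rb i *ᵥ v (i + 1) := by
    intro i hi
    have h : i < N + 1 ∧ i + 1 < N + 1 := ⟨by omega, by omega⟩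
    have hblock : sigmaBlock P ⟨i, h.1⟩ ⟨i + 1, h.2⟩ = Rb i := by
      ext a b
      exact hP.super ⟨i, h.1⟩ ⟨i + 1, h.2⟩ rfl a b
    simp only [hT]
    rw [dif_pos h, hblock]
  calc x ⬝ᵥ P *ᵥ x = ∑ i ∈ range (N + 1), ∑ j ∈ range (N + 1), T i j := by
        rw [dotProduct_mulVec_eq_sum_sigmaBlock, ← Fin.sum_univ_eq_sum_range]
        refine Fintype.sum_congr _ _ fun i => ?_
        rw [← Fin.sum_univ_eq_sum_range]
        refine Fintype.sum_congr _ _ fun j => ?_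
        have hvx : ∀ k : Fin (N + 1), v k = fun a => x ⟨k, a⟩ := fun k => funext (hv k)
        simp only [hT]
        rw [dif_pos ⟨i.isLt, j.isLt⟩, hvx i, hvx j]
    _ = tridiagForm Pb Rb N v := by
        rw [sum_range_sum_range_of_tridiagonal T hTsymm hTzero, tridiagForm, nsmul_eq_mul,
          Nat.cast_ofNat]
        congr 1
        · exact sum_congr rfl fun i hi => hTdiag i (mem_range.mp hi)
        · exact congrArg _ (sum_congr rfl fun i hi => hTsuper i (mem_range.mp hi))

end BlockTridiagonal

section SchurRecursion
variable {R : Type*} [CommRing R] {n : ℕ → ℕ}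
  {Pb : (i : ℕ) → Matrix (Fin (n i)) (Fin (n i)) R}
  {Rb : (i : ℕ) → Matrix (Fin (n i)) (Fin (n (i + 1))) R}

theorem tridiagForm_succ (K : ℕ) (v : (i : ℕ) → Fin (n i) → R) :
    tridiagForm Pb Rb (K + 1) v = tridiagForm Pb Rb K v + 2 * (v K ⬝ᵥ Rb K *ᵥ v (K + 1))
      + v (K + 1) ⬝ᵥ Pb (K + 1) *ᵥ v (K + 1) := by
  rw [tridiagForm, tridiagForm, sum_range_succ (fun i => v i ⬝ᵥ Pb i *ᵥ v i) (K + 1),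
    sum_range_succ (fun i => v i ⬝ᵥ Rb i *ᵥ v (i + 1)) K]
  ring

theorem tridiagForm_eq_of_eq_zero {K N : ℕ} (hKN : K ≤ N) {v : (i : ℕ) → Fin (n i) → R}
    (hv : ∀ j, K < j → j ≤ N → v j = 0) : tridiagForm Pb Rb N v = tridiagForm Pb Rb K v := by
  induction N, hKN using Nat.le_induction with
  | base => rfl
  | succ N hKN ih =>
    rw [tridiagForm_succ, ih fun j hKj hjN => hv j hKj (by omega), hv (N + 1) (by omega) le_rfl]
    simp

theorem tridiagForm_eq_sum_add {M : (i : ℕ) → Matrix (Fin (n i)) (Fin (n i)) R}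
    (hM0 : M 0 = Pb 0) (hMs : ∀ i : ℕ, M (i + 1) = Pb (i + 1) - (Rb i)ᵀ * (M i)⁻¹ * Rb i)
    {K : ℕ} (hsymm : ∀ j < K, (M j).IsSymm) (hunit : ∀ j < K, IsUnit (M j).det)
    (v : (i : ℕ) → Fin (n i) → R) :
    tridiagForm Pb Rb K v
      = ∑ i ∈ range K, (v i + (M i)⁻¹ *ᵥ Rb i *ᵥ v (i + 1)) ⬝ᵥ
          M i *ᵥ (v i + (M i)⁻¹ *ᵥ Rb i *ᵥ v (i + 1))
        + v K ⬝ᵥ M K *ᵥ v K := by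
  induction K with
  | zero => simp [tridiagForm, hM0]
  | succ K ih =>
    rw [tridiagForm_succ, ih (fun j hj => hsymm j (by omega)) (fun j hj => hunit j (by omega)),
      sum_range_succ, dotProduct_mulVec_add_inv_mulVec (hsymm K (by omega)) (hunit K (by omega)),
      hMs K, dotProduct_mulVec_sub_transpose_mul_mul]
    ring

noncomputable def backSubst (M : (i : ℕ) → Matrix (Fin (n i)) (Fin (n i)) R)
    (Rb : (i : ℕ) → Matrix (Fin (n i)) (Fin (n (i + 1))) R) (k : ℕ) (w : Fin (n k) → R) :
    (j : ℕ) → Fin (n j) → R := fun j =>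
  if j < k then -((M j)⁻¹ *ᵥ Rb j *ᵥ backSubst M Rb k w (j + 1))
  else if hj : j = k then hj ▸ w
  else 0
termination_by j => k - j

variable {M : (i : ℕ) → Matrix (Fin (n i)) (Fin (n i)) R}

theorem backSubst_add_inv_mulVec {k j : ℕ} (hjk : j < k) (w : Fin (n k) → R) :
    backSubst M Rb k w j + (M j)⁻¹ *ᵥ Rb j *ᵥ backSubst M Rb k w (j + 1) = 0 := by
  rw [backSubst, if_pos hjk, neg_add_cancel]

theorem backSubst_self (k : ℕ) (w : Fin (n k) → R) : backSubst M Rb k w k = w := by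
  rw [backSubst, if_neg (lt_irrefl k), dif_pos rfl]

theorem backSubst_of_lt {k j : ℕ} (hkj : k < j) (w : Fin (n k) → R) :
    backSubst M Rb k w j = 0 := by
  rw [backSubst, if_neg (by omega), dif_neg (by omega)]

end SchurRecursion

section PositiveDefinite
variable {n : ℕ → ℕ} {N : ℕ}
  {P : Matrix ((i : Fin (N + 1)) × Fin (n i)) ((i : Fin (N + 1)) × Fin (n i)) ℝ}
  {Pb : (i : ℕ) → Matrix (Fin (n i)) (Fin (n i)) ℝ}
  {Rb : (i : ℕ) → Matrix (Fin (n i)) (Fin (n (i + 1))) ℝ}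
  {M : (i : ℕ) → Matrix (Fin (n i)) (Fin (n i)) ℝ}

theorem sum_schur_squares_pos (hM : ∀ k ≤ N, (M k).PosDef) {v : (i : ℕ) → Fin (n i) → ℝ}
    (hvN : v (N + 1) = 0) (hv : ∃ i ≤ N, v i ≠ 0) :
    0 < ∑ i ∈ range (N + 1), (v i + (M i)⁻¹ *ᵥ Rb i *ᵥ v (i + 1)) ⬝ᵥ
      M i *ᵥ (v i + (M i)⁻¹ *ᵥ Rb i *ᵥ v (i + 1)) := by
  classical
  obtain ⟨i, hiN, hi⟩ := hv
  set i₀ := Nat.findGreatest (fun i => v i ≠ 0) N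
  have hi₀ : v i₀ ≠ 0 := Nat.findGreatest_spec (P := fun i => v i ≠ 0) hiN hi
  have hi₀N : i₀ ≤ N := Nat.findGreatest_le N
  have hnext : v (i₀ + 1) = 0 := by
    rcases Nat.lt_or_ge i₀ N with h | h
    · exact not_not.mp (Nat.findGreatest_is_greatest (Nat.lt_succ_self i₀) h)
    · rw [show i₀ = N by omega, hvN]
  refine sum_pos' (fun j hj => ?_) ⟨i₀, mem_range.mpr (by omega), ?_⟩
  · simpa only [star_trivial] using
      (hM j (by rw [mem_range] at hj; omega)).posSemidef.dotProduct_mulVec_nonneg _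
  · rw [hnext, mulVec_zero, mulVec_zero, add_zero]
    simpa only [star_trivial] using (hM i₀ hi₀N).dotProduct_mulVec_pos hi₀

theorem IsSymmBlockTridiagonal.posDef_of_posDef_schur (hP : IsSymmBlockTridiagonal P Pb Rb)
    (hM0 : M 0 = Pb 0) (hMs : ∀ i : ℕ, M (i + 1) = Pb (i + 1) - (Rb i)ᵀ * (M i)⁻¹ * Rb i)
    (hM : ∀ k ≤ N, (M k).PosDef) : P.PosDef := by
  refine PosDef.of_dotProduct_mulVec_pos (isHermitian_iff_isSymm.mpr hP.isSymm) fun x hx => ?_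
  set v : (i : ℕ) → Fin (n i) → ℝ := fun i => if h : i < N + 1 then fun a => x ⟨⟨i, h⟩, a⟩ else 0
  have hvx : ∀ (i : Fin (N + 1)) (a : Fin (n i)), v i a = x ⟨i, a⟩ := fun i a => by
    simp only [v, dif_pos i.isLt]
  have hvN : v (N + 1) = 0 := dif_neg (lt_irrefl _)
  have hv : ∃ i ≤ N, v i ≠ 0 := by
    obtain ⟨⟨i, a⟩, ha⟩ := Function.ne_iff.mp hx
    exact ⟨i, Nat.lt_succ_iff.mp i.isLt, fun h => ha (by rw [← hvx, h]; rfl)⟩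
  have hlast : v N ⬝ᵥ M N *ᵥ v N = (v N + (M N)⁻¹ *ᵥ Rb N *ᵥ v (N + 1)) ⬝ᵥ
      M N *ᵥ (v N + (M N)⁻¹ *ᵥ Rb N *ᵥ v (N + 1)) := by
    rw [hvN, mulVec_zero, mulVec_zero, add_zero]
  rw [star_trivial, hP.dotProduct_mulVec_eq_tridiagForm hvx,
    tridiagForm_eq_sum_add hM0 hMs (fun j hj => (hM j hj.le).isSymm)
      (fun j hj => (isUnit_iff_isUnit_det _).mp (hM j hj.le).isUnit),
    hlast, ← sum_range_succ]
  exact sum_schur_squares_pos hM hvN hv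

theorem IsSymmBlockTridiagonal.posDef_schur_of_posDef (hP : IsSymmBlockTridiagonal P Pb Rb)
    (hM0 : M 0 = Pb 0) (hMs : ∀ i : ℕ, M (i + 1) = Pb (i + 1) - (Rb i)ᵀ * (M i)⁻¹ * Rb i)
    (hPpos : P.PosDef) (k : ℕ) (hk : k ≤ N) : (M k).PosDef := by
  induction k using Nat.strong_induction_on with
  | _ k ih =>
    have hprev : ∀ j < k, (M j).PosDef := fun j hj => ih j hj (by omega)
    have hsymm : (M k).IsSymm := by
      cases k with
      | zero => rw [hM0]; exact hP.isSymm_diag (by omega)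
      | succ j =>
        rw [hMs j]
        exact (hP.isSymm_diag (by omega)).sub_transpose_mul_inv_mul (hprev j (by omega)).isSymm _
    refine PosDef.of_dotProduct_mulVec_pos (isHermitian_iff_isSymm.mpr hsymm) fun w hw => ?_
    set v := backSubst M Rb k w
    have hx : (fun p => v p.1 p.2 : ((i : Fin (N + 1)) × Fin (n i)) → ℝ) ≠ 0 := fun h =>
      hw (funext fun a => by simpa [v, backSubst_self] using congrFun h ⟨⟨k, by omega⟩, a⟩)
    have hsquares : ∀ i ∈ range k, (v i + (M i)⁻¹ *ᵥ Rb i *ᵥ v (i + 1)) ⬝ᵥ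
        M i *ᵥ (v i + (M i)⁻¹ *ᵥ Rb i *ᵥ v (i + 1)) = 0 := fun i hi => by
      rw [backSubst_add_inv_mulVec (mem_range.mp hi), zero_dotProduct]
    have hpos := hPpos.dotProduct_mulVec_pos hx
    rwa [star_trivial, hP.dotProduct_mulVec_eq_tridiagForm (v := v) fun _ _ => rfl,
      tridiagForm_eq_of_eq_zero hk fun j hkj _ => backSubst_of_lt hkj w,
      tridiagForm_eq_sum_add hM0 hMs (fun j hj => (hprev j hj).isSymm)
        (fun j hj => (isUnit_iff_isUnit_det _).mp (hprev j hj).isUnit),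
      sum_eq_zero hsquares, zero_add, backSubst_self, ← star_trivial w] at hpos

end PositiveDefinite

theorem stmt0_general (N : ℕ) (n : ℕ → ℕ)
    (Pb : (i : ℕ) → Matrix (Fin (n i)) (Fin (n i)) ℝ)
    (Rb : (i : ℕ) → Matrix (Fin (n i)) (Fin (n (i + 1))) ℝ)
    (P : Matrix ((i : Fin (N + 1)) × Fin (n i)) ((i : Fin (N + 1)) × Fin (n i)) ℝ)
    (hPsymm : P.IsSymm)
    (hdiag : ∀ (i : Fin (N + 1)) (a b : Fin (n i)), P ⟨i, a⟩ ⟨i, b⟩ = Pb i a b)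
    (hsuper : ∀ (i j : Fin (N + 1)) (hij : (j : ℕ) = (i : ℕ) + 1)
      (a : Fin (n i)) (b : Fin (n j)),
      P ⟨i, a⟩ ⟨j, b⟩ = Rb i a (Fin.cast (congrArg n hij) b))
    (hzero : ∀ (i j : Fin (N + 1)), (i : ℕ) + 1 < (j : ℕ) →
      ∀ (a : Fin (n i)) (b : Fin (n j)), P ⟨i, a⟩ ⟨j, b⟩ = 0)
    (M : (i : ℕ) → Matrix (Fin (n i)) (Fin (n i)) ℝ)
    (hM0 : M 0 = Pb 0)
    (hMs : ∀ i : ℕ, M (i + 1) = Pb (i + 1) - (Rb i)ᵀ * (M i)⁻¹ * Rb i) :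
    P.PosDef ↔ ∀ i : Fin (N + 1), (M (i : ℕ)).PosDef := by
  have hP : IsSymmBlockTridiagonal P Pb Rb := ⟨hPsymm, hdiag, hsuper, hzero⟩
  exact ⟨fun hPpos i => hP.posDef_schur_of_posDef hM0 hMs hPpos i (Nat.lt_succ_iff.mp i.isLt),
    fun hM => hP.posDef_of_posDef_schur hM0 hMs fun k hk => hM ⟨k, Nat.lt_succ_iff.mpr hk⟩⟩

/-- A symmetric block tri-diagonal real matrix `P` (with `N+1 ≥ 1` diagonal
blocks `Pb i`, super-diagonal blocks `Rb i` in position `(i, i+1)`, sub-diagonal blocks `(Rb i)ᵀ`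
in position `(i+1, i)` — encoded by symmetry of `P` — and all other blocks zero) is positive
definite if and only if the sequential Schur-complement recursion
`M 0 = Pb 0`, `M (i+1) = Pb (i+1) - (Rb i)ᵀ (M i)⁻¹ (Rb i)`
produces (well-defined, hence) positive definite matrices `M i` for all block indices `i`. -/
theorem stmt0 (N : ℕ) (n : ℕ → ℕ)
    (Pb : (i : ℕ) → Matrix (Fin (n i)) (Fin (n i)) ℝ)
    (Rb : (i : ℕ) → Matrix (Fin (n i)) (Fin (n (i + 1))) ℝ)
    (hPb : ∀ i, (Pb i).IsSymm)
    (P : Matrix ((i : Fin (N + 1)) × Fin (n i)) ((i : Fin (N + 1)) × Fin (n i)) ℝ)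
    (hPsymm : P.IsSymm)
    (hdiag : ∀ (i : Fin (N + 1)) (a b : Fin (n i)), P ⟨i, a⟩ ⟨i, b⟩ = Pb i a b)
    (hsuper : ∀ (i j : Fin (N + 1)) (hij : (j : ℕ) = (i : ℕ) + 1)
      (a : Fin (n i)) (b : Fin (n j)),
      P ⟨i, a⟩ ⟨j, b⟩ = Rb i a (Fin.cast (congrArg n hij) b))
    (hzero : ∀ (i j : Fin (N + 1)), (i : ℕ) + 1 < (j : ℕ) →
      ∀ (a : Fin (n i)) (b : Fin (n j)), P ⟨i, a⟩ ⟨j, b⟩ = 0)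
    (M : (i : ℕ) → Matrix (Fin (n i)) (Fin (n i)) ℝ)
    (hM0 : M 0 = Pb 0)
    (hMs : ∀ i : ℕ, M (i + 1) = Pb (i + 1) - (Rb i)ᵀ * (M i)⁻¹ * Rb i) :
    P.PosDef ↔ ∀ i : Fin (N + 1), (M (i : ℕ)).PosDef :=
  stmt0_general N n Pb Rb P hPsymm hdiag hsuper hzero M hM0 hMs
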